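/- arXiv:2307.07433 — 7 statements merged into one kernel-verified Lean document; each statement's English description precedes it below -/
import Mathlib

section
/- Let (V,d) be a metric space, B1,B2,B3,B4 ∈ V with midpoints M12, M34 defined by averaging distances. Define Γ between 'city' (B1,B2) and 'city' (B3,B4) as d(B1,B3)+α·d(M12,M34), between city (B1,B2) and hub H as d(B1,H)+α·d(M12,H), and between hubs H1,H2 as (1+α)d(H1,H2), where 0 ≤ α ≤ 1. Then Γ satisfies the triangle inequality for every combination of cities and hubs. -/
/-- Distance from the averaged midpoint of `B1, B2` to a point `v`. -/
noncomputable def mdist {V : Type*} [MetricSpace V] (B1 B2 v : V) : ℝ :=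
  (dist B1 v + dist B2 v) / 2

/-- Distance between the averaged midpoints of `B1, B2` and of `B3, B4`. -/
noncomputable def mmdist {V : Type*} [MetricSpace V] (B1 B2 B3 B4 : V) : ℝ :=
  (mdist B1 B2 B3 + mdist B1 B2 B4) / 2

/-- The distance Γ of the FLP reduction, on cities (ordered pairs of
branches, left summand) and hubs (right summand). -/
noncomputable def Gamma {V : Type*} [MetricSpace V] (α : ℝ) :
    ((V × V) ⊕ V) → ((V × V) ⊕ V) → ℝ
  | .inl (b1, b2), .inl (b3, b4) => dist b1 b3 + α * mmdist b1 b2 b3 b4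
  | .inl (b1, b2), .inr h => dist b1 h + α * mdist b1 b2 h
  | .inr h, .inl (b1, b2) => dist b1 h + α * mdist b1 b2 h
  | .inr h1, .inr h2 => (1 + α) * dist h1 h2

/-- Γ satisfies the triangle inequality for every combination of cities
and hubs. -/
theorem Gamma_triangle {V : Type*} [MetricSpace V] (α : ℝ)
    (hα0 : 0 ≤ α) (hα1 : α ≤ 1) (x y z : (V × V) ⊕ V) :
    Gamma α x z ≤ Gamma α x y + Gamma α y z := by
  obtain ⟨b1, b2⟩ | h1 := x <;> obtain ⟨b3, b4⟩ | h2 := y <;> obtain ⟨b5, b6⟩ | h3 := z <;>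
    simp only [Gamma, mmdist, mdist]
  · -- city city city
    have t1 := dist_triangle b1 b3 b5
    have hs : dist b2 b5 ≤ dist b2 b4 + dist b4 b5 := dist_triangle b2 b4 b5
    have h2' : dist b1 b6 ≤ dist b1 b4 + dist b4 b6 := dist_triangle b1 b4 b6
    have h3' : dist b2 b6 ≤ dist b2 b3 + dist b3 b6 := dist_triangle b2 b3 b6
    have hsum : dist b1 b5 + dist b2 b5 + dist b1 b6 + dist b2 b6 ≤
        (dist b1 b3 + dist b2 b3 + dist b1 b4 + dist b2 b4) +
        (dist b3 b5 + dist b4 b5 + dist b3 b6 + dist b4 b6) := by linarith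
    nlinarith [mul_le_mul_of_nonneg_left hsum hα0, t1]
  · -- city city hub
    have hs : dist b1 h3 + dist b2 h3 + dist b1 h3 + dist b2 h3 ≤
        (dist b1 b3 + dist b2 b3 + dist b1 b4 + dist b2 b4) +
        (dist b3 h3 + dist b4 h3 + dist b3 h3 + dist b4 h3) := by
      linarith [dist_triangle b1 b3 h3, dist_triangle b1 b4 h3,
        dist_triangle b2 b3 h3, dist_triangle b2 b4 h3]
    nlinarith [mul_le_mul_of_nonneg_left hs hα0, dist_triangle b1 b3 h3]
  · -- city hub city
    have hs : dist b1 b5 + dist b2 b5 + dist b1 b6 + dist b2 b6 ≤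
        (dist b1 h2 + dist b2 h2 + dist b1 h2 + dist b2 h2) +
        (dist b5 h2 + dist b6 h2 + dist b5 h2 + dist b6 h2) := by
      have a1 : dist b1 b5 ≤ dist b1 h2 + dist b5 h2 := dist_triangle_right b1 b5 h2
      have a2 : dist b2 b5 ≤ dist b2 h2 + dist b5 h2 := dist_triangle_right b2 b5 h2
      have a3 : dist b1 b6 ≤ dist b1 h2 + dist b6 h2 := dist_triangle_right b1 b6 h2
      have a4 : dist b2 b6 ≤ dist b2 h2 + dist b6 h2 := dist_triangle_right b2 b6 h2
      linarith
    nlinarith [mul_le_mul_of_nonneg_left hs hα0, dist_triangle_right b1 b5 h2]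
  · -- city hub hub
    have hs : dist b1 h3 + dist b2 h3 ≤
        (dist b1 h2 + dist b2 h2) + (dist h2 h3 + dist h2 h3) := by
      linarith [dist_triangle b1 h2 h3, dist_triangle b2 h2 h3]
    nlinarith [mul_le_mul_of_nonneg_left hs hα0, dist_triangle b1 h2 h3]
  · -- hub city city
    have hs : dist b5 h1 + dist b6 h1 + dist b5 h1 + dist b6 h1 ≤
        (dist b3 h1 + dist b4 h1 + dist b3 h1 + dist b4 h1) +
        (dist b3 b5 + dist b4 b5 + dist b3 b6 + dist b4 b6) := by
      have a1 : dist b5 h1 ≤ dist b3 b5 + dist b3 h1 := by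
        have := dist_triangle b5 b3 h1; rw [dist_comm b5 b3] at this; linarith
      have a2 : dist b5 h1 ≤ dist b4 b5 + dist b4 h1 := by
        have := dist_triangle b5 b4 h1; rw [dist_comm b5 b4] at this; linarith
      have a3 : dist b6 h1 ≤ dist b3 b6 + dist b3 h1 := by
        have := dist_triangle b6 b3 h1; rw [dist_comm b6 b3] at this; linarith
      have a4 : dist b6 h1 ≤ dist b4 b6 + dist b4 h1 := by
        have := dist_triangle b6 b4 h1; rw [dist_comm b6 b4] at this; linarith
      linarith
    have t1 : dist b5 h1 ≤ dist b3 b5 + dist b3 h1 := by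
      have := dist_triangle b5 b3 h1; rw [dist_comm b5 b3] at this; linarith
    nlinarith [mul_le_mul_of_nonneg_left hs hα0, t1]
  · -- hub city hub
    have a1 : dist h1 h3 ≤ dist b3 h1 + dist b3 h3 := by
      have := dist_triangle h1 b3 h3; rw [dist_comm h1 b3] at this; linarith
    have a2 : dist h1 h3 ≤ dist b4 h1 + dist b4 h3 := by
      have := dist_triangle h1 b4 h3; rw [dist_comm h1 b4] at this; linarith
    have hs : dist h1 h3 + dist h1 h3 ≤
        (dist b3 h1 + dist b4 h1) + (dist b3 h3 + dist b4 h3) := by linarith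
    nlinarith [mul_le_mul_of_nonneg_left hs hα0, a1]
  · -- hub hub city
    have a1 : dist b5 h1 ≤ dist h1 h2 + dist b5 h2 := by
      linarith [dist_triangle b5 h2 h1, dist_comm b5 h2, dist_comm h2 h1,
        dist_comm b5 h2 ▸ (rfl : dist b5 h2 = dist b5 h2)]
    have a2 : dist b6 h1 ≤ dist h1 h2 + dist b6 h2 := by
      linarith [dist_triangle b6 h2 h1, dist_comm b6 h2, dist_comm h2 h1]
    have hs : dist b5 h1 + dist b6 h1 ≤
        (dist h1 h2 + dist h1 h2) + (dist b5 h2 + dist b6 h2) := by linarith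
    nlinarith [mul_le_mul_of_nonneg_left hs hα0, a1]
  · -- hub hub hub
    have := dist_triangle h1 h2 h3
    nlinarith [mul_le_mul_of_nonneg_left this hα0]
end

section
/- Let (V,d) be a metric space, α ∈ [0,1], B1,B2,H1,H2 ∈ V, and M the averaged midpoint of B1 and B2. Then d(B1,H1)+α·d(M,H1)+d(B2,H2)+α·d(M,H2) ≤ (1+α)·(d(B1,H1)+α·d(H1,H2)+d(H2,B2)). That is, the FLP cost of a tour is at most (1+α) times its HLP cost. -/
/-- The FLP cost of a tour is at most `(1+α)` times its HLP cost, where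
the midpoint `M` of `B1, B2` satisfies `d(M,v) = (d B1 v + d B2 v)/2`. -/
theorem flp_cost_le_one_add_alpha_mul_hlp_cost {V : Type*} [MetricSpace V]
    (α : ℝ) (hα0 : 0 ≤ α) (hα1 : α ≤ 1) (B1 B2 H1 H2 : V) :
    dist B1 H1 + α * ((dist B1 H1 + dist B2 H1) / 2)
        + dist B2 H2 + α * ((dist B1 H2 + dist B2 H2) / 2)
      ≤ (1 + α) * (dist B1 H1 + α * dist H1 H2 + dist H2 B2) := by
  have h1 : dist B2 H1 ≤ dist B2 H2 + dist H2 H1 := dist_triangle _ _ _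
  have h2 : dist B1 H2 ≤ dist B1 H1 + dist H1 H2 := dist_triangle _ _ _
  have h3 : dist H2 H1 = dist H1 H2 := dist_comm _ _
  have h4 : dist B2 H2 = dist H2 B2 := dist_comm _ _
  have h5 : 0 ≤ dist H1 H2 := dist_nonneg
  nlinarith [mul_nonneg (mul_nonneg hα0 hα0) h5, mul_le_mul_of_nonneg_left h1 hα0, mul_le_mul_of_nonneg_left h2 hα0]
end

section
/- Let (V,d) be a metric space, 0 < α ≤ 1, B1,B2,H1,H2 ∈ V, M the averaged midpoint of B1,B2. Assume d(B1,H1)+α·d(H1,M) ≤ d(B2,H2)+α·d(M,H2). Let F = d(B1,H1)+α·d(H1,M)+d(B2,H2)+α·d(M,H2). Then d(B1,H1)+d(H1,B2) ≤ F/(1+α) + (1/(1+α))·d(B1,B2). -/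
/-- Key inequality for routing strategy 2: with `M` the averaged midpoint
of `B1, B2` (so `d(H,M) = (d B1 H + d B2 H)/2`), assuming w.l.o.g. that
`d(B1,H1) + α d(H1,M) ≤ d(B2,H2) + α d(M,H2)`, the one-hub routing cost is
bounded by `F/(1+α) + d(B1,B2)/(1+α)` where `F` is the FLP cost. -/
theorem one_hub_routing_bound {V : Type*} [MetricSpace V]
    (α : ℝ) (hα0 : 0 < α) (hα1 : α ≤ 1) (B1 B2 H1 H2 : V)
    (hwlog : dist B1 H1 + α * ((dist B1 H1 + dist B2 H1) / 2)
        ≤ dist B2 H2 + α * ((dist B1 H2 + dist B2 H2) / 2)) :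
    dist B1 H1 + dist H1 B2
      ≤ (dist B1 H1 + α * ((dist B1 H1 + dist B2 H1) / 2)
          + dist B2 H2 + α * ((dist B1 H2 + dist B2 H2) / 2)) / (1 + α)
        + (1 / (1 + α)) * dist B1 B2 := by
  have h1 : (0:ℝ) < 1 + α := by linarith
  have t1 : dist B2 H1 ≤ dist B2 B1 + dist B1 H1 := dist_triangle _ _ _
  have t2 : dist H1 B2 = dist B2 H1 := dist_comm _ _
  have t3 : dist B2 B1 = dist B1 B2 := dist_comm _ _
  rw [one_div, inv_mul_eq_div, ← add_div, le_div_iff₀ h1]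
  nlinarith [dist_nonneg (x := B1) (y := H1)]
end

section
/- Let α ∈ (0,1] and γ ≥ 1, and suppose ALG_FLP ≤ γ(1+α)·OPT, the routing uses one hub H1 with d(B1,H1)+α·d(H1,M) ≤ d(B2,H2)+α·d(M,H2), ALG_FLP = d(B1,H1)+α·d(H1,M)+d(B2,H2)+α·d(M,H2), OPT ≥ α·d(B1,B2), and M is the averaged midpoint of B1,B2 in a metric space. Then d(B1,H1)+d(H1,B2) ≤ (γ + 1/((1+α)α))·OPT. -/
/-- Lemma 2 of the paper: routing strategy 2 is a `γ + 1/((1+α)α)`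
approximation. Here `M` is the averaged midpoint of `B1,B2`, so
`d(H,M) = (d B1 H + d B2 H)/2`. -/
theorem strategy_two_guarantee {V : Type*} [MetricSpace V]
    (α γ OPT : ℝ) (hα0 : 0 < α) (hα1 : α ≤ 1) (hγ : 1 ≤ γ)
    (B1 B2 H1 H2 : V)
    (hwlog : dist B1 H1 + α * ((dist B1 H1 + dist B2 H1) / 2)
        ≤ dist B2 H2 + α * ((dist B1 H2 + dist B2 H2) / 2))
    (hALG : dist B1 H1 + α * ((dist B1 H1 + dist B2 H1) / 2)
          + dist B2 H2 + α * ((dist B1 H2 + dist B2 H2) / 2)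
        ≤ γ * (1 + α) * OPT)
    (hOPT : α * dist B1 B2 ≤ OPT) :
    dist B1 H1 + dist H1 B2 ≤ (γ + 1 / ((1 + α) * α)) * OPT := by
  have hcomm : dist H1 B2 = dist B2 H1 := dist_comm _ _
  set a := dist B1 H1 with ha
  set b := dist B2 H1 with hb
  set D := dist B1 B2 with hD
  -- double of the smaller half is at most the total
  have h2 : 2 * (a + α * ((a + b) / 2)) ≤ γ * (1 + α) * OPT := by linarith
  -- triangle inequality : b ≤ D + a
  have tri : b ≤ D + a := by
    rw [ha, hb, hD]
    calc dist B2 H1 ≤ dist B2 B1 + dist B1 H1 := dist_triangle _ _ _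
    _ = dist B1 B2 + dist B1 H1 := by rw [dist_comm B2 B1]
  have key : (1 + α) * (a + b) ≤ γ * (1 + α) * OPT + D := by nlinarith
  have h1α : (0:ℝ) < (1 + α) * α := by positivity
  rw [hcomm]
  have key2 : (1 + α) * α * (a + b) ≤ γ * (1 + α) * α * OPT + OPT := by nlinarith
  have heq : (γ + 1 / ((1 + α) * α)) * OPT
      = (γ * (1 + α) * α * OPT + OPT) / ((1 + α) * α) := by
    field_simp
  rw [heq, le_div_iff₀ h1α]
  nlinarith [key2]
end

section
/- In a normed real vector space, let B1, B2 be points and M = B1 + (1/2)(B2 − B1) their midpoint. For any points H1, H2 with ‖B1−H1‖+α‖H1−M‖ ≤ ‖B2−H2‖+α‖M−H2‖ and α ∈ (0,1], one has ‖B1−H1‖+‖H1−B2‖ ≤ (1/(1+α))·(‖B1−H1‖+α‖H1−M‖+‖B2−H2‖+α‖M−H2‖) + (2/(1+α))·‖B1−M‖. -/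
/-- Vector-space version of the strategy-2 inequality, with the geometric
midpoint `M = B1 + (1/2)(B2 − B1)`. -/
theorem one_hub_routing_bound_norm {E : Type*} [NormedAddCommGroup E]
    [NormedSpace ℝ E] (α : ℝ) (hα0 : 0 < α) (hα1 : α ≤ 1) (B1 B2 H1 H2 : E)
    (hwlog : ‖B1 - H1‖ + α * ‖H1 - (B1 + (1/2 : ℝ) • (B2 - B1))‖
        ≤ ‖B2 - H2‖ + α * ‖(B1 + (1/2 : ℝ) • (B2 - B1)) - H2‖) :
    ‖B1 - H1‖ + ‖H1 - B2‖
      ≤ (1 / (1 + α)) * (‖B1 - H1‖ + α * ‖H1 - (B1 + (1/2 : ℝ) • (B2 - B1))‖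
            + ‖B2 - H2‖ + α * ‖(B1 + (1/2 : ℝ) • (B2 - B1)) - H2‖)
        + (2 / (1 + α)) * ‖B1 - (B1 + (1/2 : ℝ) • (B2 - B1))‖ := by
  set M := B1 + (1/2 : ℝ) • (B2 - B1) with hM
  have hMB2 : ‖M - B2‖ = ‖B1 - M‖ := by
    have : M - B2 = B1 - M := by rw [hM]; module
    rw [this]
  have h1 : ‖H1 - B2‖ ≤ ‖H1 - M‖ + ‖B1 - M‖ := by
    calc ‖H1 - B2‖ ≤ ‖H1 - M‖ + ‖M - B2‖ := norm_sub_le_norm_sub_add_norm_sub _ _ _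
    _ = ‖H1 - M‖ + ‖B1 - M‖ := by rw [hMB2]
  have h2 : ‖H1 - M‖ ≤ ‖B1 - H1‖ + ‖B1 - M‖ := by
    calc ‖H1 - M‖ ≤ ‖H1 - B1‖ + ‖B1 - M‖ := norm_sub_le_norm_sub_add_norm_sub _ _ _
    _ = ‖B1 - H1‖ + ‖B1 - M‖ := by rw [norm_sub_rev]
  have hpos : (0:ℝ) < 1 + α := by linarith
  rw [div_mul_eq_mul_div, div_mul_eq_mul_div, ← add_div, le_div_iff₀ hpos]
  nlinarith [norm_nonneg (H1 - M), norm_nonneg (B1 - H1), norm_nonneg (B1 - M)]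
end

section
/- For γ ≥ 1 fixed, the function f(α) = γ + 1/((1+α)α) is strictly decreasing on (0,1] and the function g(α) = (1+α)γ is strictly increasing, so min(f(α), g(α)) over α ∈ (0,1] attains its maximum where f(α)=g(α); for γ = 1.488 this maximum is at most 2.441. -/
private lemma crossing_exists (γ : ℝ) (hγ : 1 ≤ γ) :
    ∃ αs ∈ Set.Ioc (0 : ℝ) 1, αs ^ 2 * (1 + αs) * γ = 1 := by
  have hγ0 : (0 : ℝ) < γ := by linarith
  set ε : ℝ := 1 / (2 * γ) with hε
  have hε0 : 0 < ε := by positivity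
  have hε1 : ε ≤ 1 / 2 := by
    rw [hε]; rw [div_le_div_iff₀ (by positivity) (by norm_num)]; nlinarith
  have hcont : ContinuousOn (fun x : ℝ => x ^ 2 * (1 + x) * γ) (Set.Icc ε 1) := by
    fun_prop
  have hsub := intermediate_value_Icc (by linarith : ε ≤ 1) hcont
  have h1 : (1 : ℝ) ∈ Set.Icc (ε ^ 2 * (1 + ε) * γ) (1 ^ 2 * (1 + 1) * γ) := by
    constructor
    · have : ε ^ 2 * (1 + ε) * γ = (1 + ε) / (4 * γ) := by
        rw [hε]; field_simp; ring
      rw [this]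
      rw [div_le_one (by positivity)]; nlinarith
    · nlinarith
  obtain ⟨αs, hmem, heq⟩ := hsub h1
  exact ⟨αs, ⟨lt_of_lt_of_le hε0 hmem.1, hmem.2⟩, heq⟩

/-- For fixed `γ ≥ 1`, `PA₁(α) = γ + 1/((1+α)α)` is strictly decreasing and
`PA₂(α) = (1+α)γ` strictly increasing on `(0,1]`, so the minimum of the two
is maximized at their crossing point; for `γ = 1.488` this maximum is at
most `2.441`. -/
theorem pa_bounds_monotone_and_crossing :
    (∀ γ : ℝ, 1 ≤ γ →
      StrictAntiOn (fun α : ℝ => γ + 1 / ((1 + α) * α)) (Set.Ioc 0 1) ∧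
      StrictMonoOn (fun α : ℝ => (1 + α) * γ) (Set.Ioc 0 1) ∧
      ∃ αs ∈ Set.Ioc (0 : ℝ) 1,
        γ + 1 / ((1 + αs) * αs) = (1 + αs) * γ ∧
        ∀ α ∈ Set.Ioc (0 : ℝ) 1,
          min (γ + 1 / ((1 + α) * α)) ((1 + α) * γ) ≤ (1 + αs) * γ) ∧
    (∀ α ∈ Set.Ioc (0 : ℝ) 1,
      min (1.488 + 1 / ((1 + α) * α)) ((1 + α) * 1.488) ≤ 2.441) := by
  constructor
  · intro γ hγ
    refine ⟨?_, ?_, ?_⟩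
    · intro a ha b hb hab
      have ha0 : 0 < a := ha.1
      have hb0 : 0 < b := hb.1
      have hpa : 0 < (1 + a) * a := by positivity
      have hpb : 0 < (1 + b) * b := by positivity
      have : 1 / ((1 + b) * b) < 1 / ((1 + a) * a) := by
        apply one_div_lt_one_div_of_lt hpa
        nlinarith
      show γ + 1 / ((1 + b) * b) < γ + 1 / ((1 + a) * a)
      linarith
    · intro a _ b _ hab
      have hγ0 : 0 < γ := by linarith
      simp only
      nlinarith
    · obtain ⟨αs, hαs, heq⟩ := crossing_exists γ hγ
      have h0 : 0 < αs := hαs.1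
      have h1 : αs ≤ 1 := hαs.2
      have hp : 0 < (1 + αs) * αs := by positivity
      have hkey : γ + 1 / ((1 + αs) * αs) = (1 + αs) * γ := by
        field_simp
        nlinarith
      refine ⟨αs, hαs, hkey, ?_⟩
      intro α hα
      have hα0 : 0 < α := hα.1
      have hpα : 0 < (1 + α) * α := by positivity
      rcases le_total α αs with h | h
      · calc min (γ + 1 / ((1 + α) * α)) ((1 + α) * γ) ≤ (1 + α) * γ :=
              min_le_right _ _
          _ ≤ (1 + αs) * γ := by nlinarith
      · calc min (γ + 1 / ((1 + α) * α)) ((1 + α) * γ)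
              ≤ γ + 1 / ((1 + α) * α) := min_le_left _ _
          _ ≤ γ + 1 / ((1 + αs) * αs) := by
              have : 1 / ((1 + α) * α) ≤ 1 / ((1 + αs) * αs) := by
                apply one_div_le_one_div_of_le hp
                nlinarith
              linarith
          _ = (1 + αs) * γ := hkey
  · intro α hα
    have hα0 : 0 < α := hα.1
    have hα1 : α ≤ 1 := hα.2
    have hp : 0 < (1 + α) * α := by positivity
    rcases le_total α 0.64 with h | h
    · calc min (1.488 + 1 / ((1 + α) * α)) ((1 + α) * 1.488)
          ≤ (1 + α) * 1.488 := min_le_right _ _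
        _ ≤ 2.441 := by nlinarith
    · calc min (1.488 + 1 / ((1 + α) * α)) ((1 + α) * 1.488)
          ≤ 1.488 + 1 / ((1 + α) * α) := min_le_left _ _
        _ ≤ 2.441 := by
            have h2 : (1.0496 : ℝ) ≤ (1 + α) * α := by nlinarith
            have : 1 / ((1 + α) * α) ≤ 1 / 1.0496 :=
              one_div_le_one_div_of_le (by norm_num) h2
            have : (1 : ℝ) / 1.0496 ≤ 0.953 := by norm_num
            linarith [one_div_le_one_div_of_le (show (0:ℝ) < 1.0496 by norm_num) h2]
end

section
/- For every α ∈ (0,1] and γ = 1.488, min((1+α)·γ, 1/α) ≤ 2.173. -/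
/-- Combining the proposed algorithm's two-hub guarantee `(1+α)γ` with BaP's
one-hub guarantee `1/α` for `γ = 1.488` yields the bound `2.173` for the
MAuHLP. -/
theorem mauhlp_combined_bound (α : ℝ) (hα0 : 0 < α) (hα1 : α ≤ 1) :
    min ((1 + α) * 1.488) (1 / α) ≤ 2.173 := by
  rcases le_or_gt α 0.4603 with h | h
  · exact le_trans (min_le_left _ _) (by nlinarith)
  · refine le_trans (min_le_right _ _) ?_
    rw [div_le_iff₀ hα0]
    nlinarith
end
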